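/- The function G(t) = M(t)/ψ(t)² + 2/ψ(t) on (0,π), where M(t) = 1/t² + 1/(π−t)² − cos²t/sin²t, satisfies lim_{t→0⁺} G(t) = 0, lim_{t→π⁻} G(t) = 0, |G(t)| ≤ B for every t ∈ (0,π), and G(π/2) = B, where B = 2/(1+log π) + 8/(π²(1+log π)²). -/

import Mathlib

/-!
Since `ψ ≥ 1 + log π`, with equality at `π/2`, and `G(π - t) = G(t)`, everything follows from
`0 ≤ M ≤ 8/π² = M(π/2)` on `(0, π)` together with `ψ → ∞` at the endpoints.

The lower bound on `M` is `t cos t ≤ sin t` on `[0, π/2]`. For the upper bound, iterating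
`1/sin² x = (1/sin²(x/2) + 1/sin²((x+π)/2))/4` and using `sin² u ≤ u²` shows that every partial sum
of `∑_{k ∈ ℤ} 1/(t + kπ)²` is at most `1/sin² t`. Pairing `t + kπ` with `(k+1)π - t`, whose sum
is `(2k+1)π`, and using `1/a² + 1/b² ≥ 8/(a+b)²` gives
`1/sin² t - 1/t² - 1/(π-t)² ≥ (8/π²) ∑_{k ≥ 1} 1/(2k+1)² = 1 - 8/π²`.
-/

open Real Set Filter Topology

noncomputable section

/-- `ψ(t) = log (π e / sin t)`. -/
def psi (t : ℝ) : ℝ := Real.log (π * Real.exp 1 / Real.sin t)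

/-- The function `M` from the proof of Theorem 1. -/
def Mfun (t : ℝ) : ℝ := 1 / t ^ 2 + 1 / (π - t) ^ 2 - Real.cos t ^ 2 / Real.sin t ^ 2

/-- The function `G` from the proof of Theorem 1. -/
def Gfun (t : ℝ) : ℝ := Mfun t / psi t ^ 2 + 2 / psi t

/-- `B = 2/(1+log π) + 8/(π²(1+log π)²)`. -/
def Bconst : ℝ := 2 / (1 + Real.log π) + 8 / (π ^ 2 * (1 + Real.log π) ^ 2)

lemma eight_div_add_sq_le {a b : ℝ} (ha : 0 < a) (hb : 0 < b) :
    8 / (a + b) ^ 2 ≤ 1 / a ^ 2 + 1 / b ^ 2 := by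
  rw [div_add_div _ _ (by positivity) (by positivity),
    div_le_div_iff₀ (by positivity) (by positivity)]
  nlinarith [sq_nonneg (a ^ 2 - b ^ 2), mul_nonneg (mul_nonneg ha.le hb.le) (sq_nonneg (a - b))]

lemma hasSum_one_div_odd_sq :
    HasSum (fun n : ℕ ↦ 1 / (2 * n + 1 : ℝ) ^ 2) (π ^ 2 / 8) := by
  have heven : HasSum (fun n : ℕ ↦ 1 / ((2 * n : ℕ) : ℝ) ^ 2) (π ^ 2 / 24) := by
    have h : (fun n : ℕ ↦ 1 / ((2 * n : ℕ) : ℝ) ^ 2) = fun n : ℕ ↦ 1 / 4 * (1 / (n : ℝ) ^ 2) := by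
      ext n; push_cast; ring
    rw [h, show π ^ 2 / 24 = 1 / 4 * (π ^ 2 / 6) by ring]
    exact hasSum_zeta_two.mul_left _
  have hodd : Summable (fun n : ℕ ↦ 1 / ((2 * n + 1 : ℕ) : ℝ) ^ 2) :=
    hasSum_zeta_two.summable.comp_injective fun a b h ↦ by omega
  have hsum := hasSum_zeta_two.unique
    (HasSum.even_add_odd (f := fun n : ℕ ↦ 1 / (n : ℝ) ^ 2) heven hodd.hasSum)
  have h := hodd.hasSum
  rw [show ∑' n : ℕ, 1 / ((2 * n + 1 : ℕ) : ℝ) ^ 2 = π ^ 2 / 8 by linarith] at h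
  exact_mod_cast h

lemma one_div_sin_sq_eq_half_angle {x : ℝ} (hx : sin x ≠ 0) :
    1 / sin x ^ 2 = (1 / sin (x / 2) ^ 2 + 1 / sin ((x + π) / 2) ^ 2) / 4 := by
  have hx2 : sin x = 2 * sin (x / 2) * cos (x / 2) := by
    rw [← sin_two_mul, mul_div_cancel₀ x two_ne_zero]
  have hs : sin (x / 2) ≠ 0 := fun h ↦ hx (by rw [hx2, h]; ring)
  have hc : cos (x / 2) ≠ 0 := fun h ↦ hx (by rw [hx2, h]; ring)
  rw [add_div x π, sin_add_pi_div_two, hx2]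
  field_simp
  linear_combination (-4) * sin_sq_add_cos_sq (x / 2)

lemma sin_add_nat_mul_pi_div_two_pow_ne_zero {x : ℝ} (hx : sin x ≠ 0) (n k : ℕ) :
    sin ((x + k * π) / 2 ^ n) ≠ 0 := by
  rw [Ne, sin_eq_zero_iff]
  rintro ⟨m, hm⟩
  apply hx
  rw [sin_eq_zero_iff]
  refine ⟨m * 2 ^ n - k, ?_⟩
  rw [eq_div_iff (by positivity)] at hm
  push_cast
  linarith

lemma one_div_sin_sq_eq_sum_div_four_pow {x : ℝ} (hx : sin x ≠ 0) (n : ℕ) :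
    1 / sin x ^ 2 = (∑ k ∈ Finset.range (2 ^ n), 1 / sin ((x + k * π) / 2 ^ n) ^ 2) / 4 ^ n := by
  induction n with
  | zero => simp
  | succ n ih =>
    have halve (k : ℕ) : 1 / sin ((x + k * π) / 2 ^ n) ^ 2 =
        (1 / sin ((x + k * π) / 2 ^ (n + 1)) ^ 2
          + 1 / sin ((x + (2 ^ n + k : ℕ) * π) / 2 ^ (n + 1)) ^ 2) / 4 := by
      rw [one_div_sin_sq_eq_half_angle (sin_add_nat_mul_pi_div_two_pow_ne_zero hx n k)]
      have h2n : (2 : ℝ) ^ (n + 1) = 2 ^ n * 2 := pow_succ 2 n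
      congr 4
      · rw [h2n, div_div]
      · rw [h2n]; push_cast; congr 1; field_simp; ring
    rw [ih, Finset.sum_congr rfl fun k _ ↦ halve k, ← Finset.sum_div, Finset.sum_add_distrib,
      Nat.two_pow_succ, Finset.sum_range_add, div_div, ← pow_succ']

lemma sum_one_div_sq_add_nat_mul_pi_le {x : ℝ} (hx : sin x ≠ 0) (n : ℕ) :
    ∑ k ∈ Finset.range (2 ^ n), 1 / (x + k * π) ^ 2 ≤ 1 / sin x ^ 2 := by
  rw [one_div_sin_sq_eq_sum_div_four_pow hx n, Finset.sum_div]
  refine Finset.sum_le_sum fun k _ ↦ ?_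
  have hs := sin_add_nat_mul_pi_div_two_pow_ne_zero hx n k
  calc 1 / (x + k * π) ^ 2 = 1 / ((x + k * π) / 2 ^ n) ^ 2 / 4 ^ n := by
        field_simp
        rw [← pow_mul, mul_comm n 2, pow_mul]
        norm_num
    _ ≤ 1 / sin ((x + k * π) / 2 ^ n) ^ 2 / 4 ^ n := by
        gcongr ?_ / _
        exact one_div_le_one_div_of_le (by positivity) sin_sq_le_sq

lemma sum_range_two_pow_pairs_le {t : ℝ} (ht : sin t ≠ 0) (n : ℕ) :
    ∑ i ∈ Finset.range (2 ^ n), (1 / (t + i * π) ^ 2 + 1 / ((i + 1) * π - t) ^ 2)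
      ≤ 1 / sin t ^ 2 := by
  set m := 2 ^ n
  have hsin : sin (t - m * π) ^ 2 = sin t ^ 2 := by
    rw [sin_sub_nat_mul_pi, mul_pow, ← pow_mul, mul_comm m 2, pow_mul]; simp
  have hx : sin (t - m * π) ≠ 0 := by
    intro h
    rw [h, zero_pow two_ne_zero, eq_comm, sq_eq_zero_iff] at hsin
    exact ht hsin
  -- Shifting by `mπ` centres the `2m` terms at `t`: they are `1/(t + iπ)²` and `1/(t - (i+1)π)²`.
  have hright (k : ℕ) : 1 / (t - m * π + (m + k : ℕ) * π) ^ 2 = 1 / (t + k * π) ^ 2 := by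
    push_cast
    ring
  have hleft (k : ℕ) (hk : k < m) :
      1 / (t - m * π + (m - 1 - k : ℕ) * π) ^ 2 = 1 / ((k + 1) * π - t) ^ 2 := by
    rw [Nat.sub_sub, Nat.cast_sub (by omega)]
    push_cast
    ring
  calc ∑ i ∈ Finset.range m, (1 / (t + i * π) ^ 2 + 1 / ((i + 1) * π - t) ^ 2)
      = ∑ k ∈ Finset.range (m + m), 1 / (t - m * π + k * π) ^ 2 := by
        rw [Finset.sum_range_add,
          ← Finset.sum_range_reflect (fun k : ℕ ↦ 1 / (t - m * π + k * π) ^ 2) m,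
          ← Finset.sum_add_distrib]
        refine Finset.sum_congr rfl fun k hk ↦ ?_
        rw [hleft k (Finset.mem_range.mp hk), hright k, add_comm]
    _ ≤ 1 / sin (t - m * π) ^ 2 := by
        rw [← Nat.two_pow_succ]
        exact sum_one_div_sq_add_nat_mul_pi_le hx (n + 1)
    _ = 1 / sin t ^ 2 := by rw [hsin]

lemma sum_range_pairs_le {t : ℝ} (ht : t ∈ Ioo 0 π) (N : ℕ) :
    ∑ i ∈ Finset.range N, (1 / (t + i * π) ^ 2 + 1 / ((i + 1) * π - t) ^ 2)
      ≤ 1 / sin t ^ 2 := by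
  refine le_trans ?_ (sum_range_two_pow_pairs_le (sin_pos_of_pos_of_lt_pi ht.1 ht.2).ne' N)
  exact Finset.sum_le_sum_of_subset_of_nonneg
    (Finset.range_subset_range.mpr Nat.lt_two_pow_self.le) fun _ _ _ ↦ by positivity

lemma eight_div_odd_sq_le {t : ℝ} (ht : t ∈ Ioo 0 π) (k : ℕ) :
    8 / π ^ 2 * (1 / (2 * k + 1) ^ 2) ≤ 1 / (t + k * π) ^ 2 + 1 / ((k + 1) * π - t) ^ 2 := by
  have hk : (0 : ℝ) ≤ k := k.cast_nonneg
  calc 8 / π ^ 2 * (1 / (2 * k + 1) ^ 2) = 8 / ((t + k * π) + ((k + 1) * π - t)) ^ 2 := by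
        rw [show (t + k * π) + ((k + 1) * π - t) = (2 * k + 1) * π by ring, mul_pow,
          mul_one_div, div_div, mul_comm]
    _ ≤ _ := eight_div_add_sq_le (by nlinarith [ht.1, pi_pos]) (by nlinarith [ht.2, pi_pos])

lemma one_div_sq_add_one_div_pi_sub_sq_le {t : ℝ} (ht : t ∈ Ioo 0 π) :
    1 / t ^ 2 + 1 / (π - t) ^ 2 + (1 - 8 / π ^ 2) ≤ 1 / sin t ^ 2 := by
  set f : ℕ → ℝ := fun k ↦ 1 / (t + k * π) ^ 2 + 1 / ((k + 1) * π - t) ^ 2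
  set g : ℕ → ℝ := fun k ↦ 8 / π ^ 2 * (1 / (2 * k + 1 : ℝ) ^ 2)
  have hf0 : f 0 = 1 / t ^ 2 + 1 / (π - t) ^ 2 := by simp [f]
  have hg : HasSum (fun k ↦ g (k + 1)) (1 - 8 / π ^ 2) := by
    have h := (hasSum_nat_add_iff' 1).mpr (hasSum_one_div_odd_sq.mul_left (8 / π ^ 2))
    rwa [Finset.sum_range_one, div_mul_div_cancel₀ (by positivity), div_self (by positivity),
      Nat.cast_zero, mul_zero, zero_add, one_pow, div_one, mul_one] at h
  rw [← hf0]
  refine le_of_tendsto' (tendsto_const_nhds.add hg.tendsto_sum_nat) fun N ↦ ?_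
  calc f 0 + ∑ i ∈ Finset.range N, g (i + 1)
      ≤ f 0 + ∑ i ∈ Finset.range N, f (i + 1) := by
        gcongr with i
        exact eight_div_odd_sq_le ht (i + 1)
    _ = ∑ i ∈ Finset.range (N + 1), f i := by rw [Finset.sum_range_succ', add_comm]
    _ ≤ 1 / sin t ^ 2 := sum_range_pairs_le ht (N + 1)

lemma Mfun_le {t : ℝ} (ht : t ∈ Ioo 0 π) : Mfun t ≤ 8 / π ^ 2 := by
  have hs : sin t ≠ 0 := (sin_pos_of_pos_of_lt_pi ht.1 ht.2).ne'
  have hcot : cos t ^ 2 / sin t ^ 2 = 1 / sin t ^ 2 - 1 := by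
    field_simp
    linear_combination sin_sq_add_cos_sq t
  have := one_div_sq_add_one_div_pi_sub_sq_le ht
  rw [Mfun, hcot]
  linarith

lemma cos_sq_div_sin_sq_le {t : ℝ} (h0 : 0 < t) (ht : t ≤ π / 2) :
    cos t ^ 2 / sin t ^ 2 ≤ 1 / t ^ 2 := by
  rcases ht.eq_or_lt with rfl | ht
  · rw [cos_pi_div_two, zero_pow two_ne_zero, zero_div]
    positivity
  have hc : 0 < cos t := cos_pos_of_mem_Ioo ⟨by linarith, ht⟩
  have hs : 0 < sin t := sin_pos_of_pos_of_lt_pi h0 (by linarith)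
  have htan : t * cos t ≤ sin t := by
    have := le_tan h0.le ht
    rwa [tan_eq_sin_div_cos, le_div_iff₀ hc] at this
  rw [div_le_div_iff₀ (by positivity) (by positivity), one_mul]
  nlinarith [mul_pos h0 hc]

lemma Mfun_pi_sub (t : ℝ) : Mfun (π - t) = Mfun t := by
  rw [Mfun, Mfun, sin_pi_sub, cos_pi_sub, sub_sub_cancel, neg_sq, add_comm (1 / (π - t) ^ 2)]

lemma Mfun_nonneg_of_le_pi_div_two {t : ℝ} (h0 : 0 < t) (ht : t ≤ π / 2) : 0 ≤ Mfun t := by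
  have := cos_sq_div_sin_sq_le h0 ht
  have : 0 ≤ 1 / (π - t) ^ 2 := by positivity
  rw [Mfun]
  linarith

lemma Mfun_nonneg {t : ℝ} (ht : t ∈ Ioo 0 π) : 0 ≤ Mfun t := by
  rcases le_total t (π / 2) with h | h
  · exact Mfun_nonneg_of_le_pi_div_two ht.1 h
  · rw [← Mfun_pi_sub]
    exact Mfun_nonneg_of_le_pi_div_two (by linarith [ht.2]) (by linarith)

lemma psi_pi_sub (t : ℝ) : psi (π - t) = psi t := by
  rw [psi, psi, sin_pi_sub]

lemma Gfun_pi_sub (t : ℝ) : Gfun (π - t) = Gfun t := by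
  rw [Gfun, Gfun, Mfun_pi_sub, psi_pi_sub]

lemma one_add_log_pi_pos : 0 < 1 + log π :=
  add_pos_of_pos_of_nonneg one_pos (log_nonneg (by linarith [pi_gt_three]))

lemma psi_eq {t : ℝ} (ht : 0 < sin t) : psi t = 1 + log π - log (sin t) := by
  rw [psi, log_div (by positivity) ht.ne', log_mul pi_ne_zero (exp_ne_zero 1), log_exp]
  ring

lemma one_add_log_pi_le_psi {t : ℝ} (ht : t ∈ Ioo 0 π) : 1 + log π ≤ psi t := by
  have hs := sin_pos_of_pos_of_lt_pi ht.1 ht.2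
  rw [psi_eq hs]
  linarith [log_nonpos hs.le (sin_le_one t)]

lemma tendsto_psi_nhdsGT_zero : Tendsto psi (𝓝[>] 0) atTop := by
  have hsin : Tendsto sin (𝓝[>] 0) (𝓝[>] 0) := by
    refine tendsto_nhdsWithin_of_tendsto_nhds_of_eventually_within _ ?_ ?_
    · simpa using continuous_sin.continuousWithinAt.tendsto (x := 0) (s := Ioi 0)
    · filter_upwards [Ioo_mem_nhdsGT pi_pos] with t ht
      exact sin_pos_of_pos_of_lt_pi ht.1 ht.2
  have hlog := tendsto_neg_atBot_atTop.comp (tendsto_log_nhdsGT_zero.comp hsin)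
  refine (tendsto_atTop_add_const_left _ (1 + log π) hlog).congr' ?_
  filter_upwards [Ioo_mem_nhdsGT pi_pos] with t ht
  rw [psi_eq (sin_pos_of_pos_of_lt_pi ht.1 ht.2), Function.comp_apply, Function.comp_apply,
    sub_eq_add_neg]

lemma Gfun_nonneg {t : ℝ} (ht : t ∈ Ioo 0 π) : 0 ≤ Gfun t := by
  have := Mfun_nonneg ht
  have := one_add_log_pi_pos.trans_le (one_add_log_pi_le_psi ht)
  rw [Gfun]
  positivity

lemma Gfun_le {t : ℝ} (ht : t ∈ Ioo 0 π) :
    Gfun t ≤ 2 / psi t + 8 / (π ^ 2 * psi t ^ 2) := by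
  have hψ := one_add_log_pi_pos.trans_le (one_add_log_pi_le_psi ht)
  rw [Gfun, add_comm, ← div_div]
  gcongr
  exact Mfun_le ht

lemma abs_Gfun_le {t : ℝ} (ht : t ∈ Ioo 0 π) : |Gfun t| ≤ Bconst := by
  have hψ := one_add_log_pi_le_psi ht
  have := one_add_log_pi_pos
  rw [abs_of_nonneg (Gfun_nonneg ht)]
  refine (Gfun_le ht).trans ?_
  rw [Bconst]
  gcongr

lemma Gfun_pi_div_two : Gfun (π / 2) = Bconst := by
  have hψ : psi (π / 2) = 1 + log π := by
    rw [psi_eq (by simp), sin_pi_div_two, log_one, sub_zero]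
  have hM : Mfun (π / 2) = 8 / π ^ 2 := by
    rw [Mfun, cos_pi_div_two, sin_pi_div_two, sub_half]
    field_simp
    norm_num
  rw [Gfun, Bconst, hψ, hM, div_div, add_comm]

lemma tendsto_Gfun_nhdsGT_zero : Tendsto Gfun (𝓝[>] 0) (𝓝 0) := by
  have hψ := tendsto_psi_nhdsGT_zero
  have hbound : Tendsto (fun t ↦ 2 / psi t + 8 / (π ^ 2 * psi t ^ 2)) (𝓝[>] 0) (𝓝 0) := by
    have h2 := tendsto_const_nhds.div_atTop (a := (2 : ℝ)) hψ
    have hψ2 := (tendsto_pow_atTop two_ne_zero).comp hψ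
    have h8 := tendsto_const_nhds.div_atTop (a := (8 : ℝ))
      (tendsto_const_nhds.pos_mul_atTop (pow_pos pi_pos 2) hψ2)
    simpa using h2.add h8
  have hmem := Ioo_mem_nhdsGT pi_pos
  exact tendsto_of_tendsto_of_tendsto_of_le_of_le' tendsto_const_nhds hbound
    (eventually_of_mem hmem fun _ ↦ Gfun_nonneg) (eventually_of_mem hmem fun _ ↦ Gfun_le)

lemma tendsto_Gfun_nhdsLT_pi : Tendsto Gfun (𝓝[<] π) (𝓝 0) := by
  have hsub : Tendsto (π - ·) (𝓝[<] π) (𝓝[>] 0) := by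
    have h := (continuous_sub_left π).continuousWithinAt.tendsto_nhdsWithin
      (x := π) (t := Ioi 0) fun t (ht : t < π) ↦ sub_pos.mpr ht
    rwa [sub_self] at h
  simpa only [Function.comp_def, Gfun_pi_sub] using tendsto_Gfun_nhdsGT_zero.comp hsub

/-- `G → 0` at both endpoints of `(0,π)`, `|G| ≤ B` on `(0,π)`, and `G(π/2) = B`. -/
theorem Gfun_properties :
    Tendsto Gfun (𝓝[>] (0 : ℝ)) (𝓝 0) ∧
    Tendsto Gfun (𝓝[<] π) (𝓝 0) ∧
    (∀ t ∈ Ioo (0 : ℝ) π, |Gfun t| ≤ Bconst) ∧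
    Gfun (π / 2) = Bconst :=
  ⟨tendsto_Gfun_nhdsGT_zero, tendsto_Gfun_nhdsLT_pi, fun _ ↦ abs_Gfun_le, Gfun_pi_div_two⟩
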